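/- arXiv:2512.24252 — 2 statements merged into one kernel-verified Lean document; each statement's English description precedes it below -/
import Mathlib

section
/- Let (S,K,I) be a split graph with ⋃_{v∈I} N_S(v) = K, |K| equal to the clique number of S, and |I| equal to the independence number of S with |I| ≥ 2. Suppose σ_{uv}(S) = 1 for all distinct u,v ∈ I (i.e., Φ(S) is simple and complete), let U be the set of universal vertices of S, and let d be the common degree in S of the vertices of I. Then: (a) S is active (every vertex lies in some induced P4) if and only if U = ∅; (b) if S is active then |K| = |I| and d ∈ {1, |K| − 1}; (c) conversely, if |K| = |I| or d = 1, then S is active. -/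
open SimpleGraph

/-- `T` is a 4-element vertex subset of `S` whose induced subgraph is a path on 4 vertices. -/
def IsInducedP4 {V : Type*} (S : SimpleGraph V) (T : Finset V) : Prop :=
  T.card = 4 ∧ Nonempty (S.induce (T : Set V) ≃g pathGraph 4)

/-- `σ_{uv}(S)`: the number of induced `P4`'s of `S` containing both `u` and `v`. -/
noncomputable def sigmaP4 {V : Type*} (S : SimpleGraph V) (u v : V) : ℕ :=
  Nat.card {T : Finset V // IsInducedP4 S T ∧ u ∈ T ∧ v ∈ T}

/-!
For distinct `u, v ∈ I` the induced `P4`s through `u` and `v` are exactly the paths `u x y v`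
with `x ∈ N(u) \ N(v)` and `y ∈ N(v) \ N(u)`, so `σ_{uv} = |N(u) \ N(v)| · |N(v) \ N(u)|`, and
`σ ≡ 1` says that the neighbourhoods of the vertices of `I` are `d`-sets any two of which differ
in exactly one element. Such a family either has a common core of size `d - 1` with distinct
petals, or consists of the complements of single points in its union `K`. Counting in both shapes
gives `|K| = |I|` and `d ∈ {1, |K| - 1}` when no point lies in every neighbourhood, and
`|I| < |K|` otherwise. A point lying in every neighbourhood is a universal vertex, and a
universal vertex lies in no induced `P4`; every other vertex lies on some path `u x y v`.
-/

open Finset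

section InducedP4

variable {V : Type*} {S : SimpleGraph V}

lemma isInducedP4_iff_exists_embedding {T : Finset V} :
    IsInducedP4 S T ↔ ∃ f : pathGraph 4 ↪g S, T = univ.map f.toEmbedding := by
  constructor
  · rintro ⟨hcard, ⟨e⟩⟩
    let f := (Embedding.induce (T : Set V)).comp e.symm.toEmbedding
    refine ⟨f, (eq_of_subset_of_card_le (fun x hx => ?_) (by simp [hcard])).symm⟩
    obtain ⟨i, -, rfl⟩ := mem_map.1 hx
    exact (e.symm i).2
  · rintro ⟨f, rfl⟩
    refine ⟨by simp, ⟨?_⟩⟩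
    have h : Set.range f = ((univ.map f.toEmbedding : Finset V) : Set V) := by simp
    exact h ▸ f.isoInduceRange.symm

lemma pathGraph_four_neighborSet_injective : Function.Injective (pathGraph 4).neighborSet := by
  intro i j h
  have := Set.ext_iff.1 h
  simp only [mem_neighborSet, pathGraph_adj] at this
  clear h
  revert i j
  decide

lemma isInducedP4_iff [DecidableEq V] {T : Finset V} :
    IsInducedP4 S T ↔ ∃ a b c d, T = {a, b, c, d} ∧ S.Adj a b ∧ S.Adj b c ∧ S.Adj c d ∧
      ¬S.Adj a c ∧ ¬S.Adj a d ∧ ¬S.Adj b d := by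
  rw [isInducedP4_iff_exists_embedding]
  constructor
  · rintro ⟨f, rfl⟩
    have adj (i j : Fin 4) : S.Adj (f i) (f j) ↔ i.val + 1 = j.val ∨ j.val + 1 = i.val := by
      rw [f.map_adj_iff, pathGraph_adj]
    refine ⟨f 0, f 1, f 2, f 3, ?_, ?_⟩
    · simp [map_eq_image, Fin.univ_succ]
    · simp only [adj]; decide
  · rintro ⟨a, b, c, d, rfl, hab, hbc, hcd, hac, had, hbd⟩
    have adj (i j : Fin 4) : S.Adj (![a, b, c, d] i) (![a, b, c, d] j) ↔ (pathGraph 4).Adj i j := by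
      fin_cases i <;> fin_cases j <;> simp [pathGraph_adj, S.adj_comm, *]
    have inj : Function.Injective ![a, b, c, d] := fun i j hij =>
      pathGraph_four_neighborSet_injective <| Set.ext fun k => by
        simp only [mem_neighborSet, ← adj, hij]
    refine ⟨⟨⟨![a, b, c, d], inj⟩, adj _ _⟩, ?_⟩
    simp [map_eq_image, Fin.univ_succ]

lemma notMem_of_isInducedP4 [DecidableEq V] {T : Finset V} (hT : IsInducedP4 S T) {x : V}
    (hx : ∀ w, w ≠ x → S.Adj x w) : x ∉ T := by
  obtain ⟨a, b, c, d, rfl, hab, hbc, hcd, hac, had, hbd⟩ := isInducedP4_iff.1 hT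
  intro hxT
  simp only [mem_insert, mem_singleton] at hxT
  rcases hxT with rfl | rfl | rfl | rfl
  · exact had (hx d fun h => hac (h ▸ hcd.symm))
  · exact hbd (hx d fun h => had (h ▸ hab))
  · exact hac (hx a fun h => had (h ▸ hcd)).symm
  · exact hbd (hx b fun h => had (h ▸ hab)).symm

end InducedP4

section Family

variable {ι α : Type*} [DecidableEq α] {I : Finset ι} {A : ι → Finset α} {d : ℕ}

lemma subset_insert_of_card_sdiff_eq_one {s t : Finset α} {e : α} (h : #(s \ t) = 1)
    (hes : e ∈ s) (het : e ∉ t) : s ⊆ insert e t := by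
  obtain ⟨x, hx⟩ := card_eq_one.1 h
  obtain rfl : e = x := mem_singleton.1 (hx ▸ mem_sdiff.2 ⟨hes, het⟩)
  rw [insert_eq, union_comm]
  exact sdiff_le_iff.1 hx.le

lemma injOn_of_card_sdiff_eq_one (hdiff : ∀ t ∈ I, ∀ s ∈ I, t ≠ s → #(A t \ A s) = 1) :
    Set.InjOn A I := fun t ht s hs h => by
  by_contra hts
  simpa [h] using hdiff t ht s hs hts

-- If `e` were common to `A u`, `A v`, `A t` but missing from `A s`, all three would lie in
-- `insert e (A s)`, which is too small to contain `insert a (A u ∪ A v)`.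
lemma erase_subset_of_notMem_union (hA : ∀ t ∈ I, #(A t) = d)
    (hdiff : ∀ t ∈ I, ∀ s ∈ I, t ≠ s → #(A t \ A s) = 1) {u v t s : ι} {a : α} (hu : u ∈ I)
    (hv : v ∈ I) (huv : u ≠ v) (ht : t ∈ I) (hs : s ∈ I) (hat : a ∈ A t) (hau : a ∉ A u)
    (hav : a ∉ A v) : (A t).erase a ⊆ A s := by
  have hmiss : ∀ w ∈ I, ∀ r ∈ I, ∀ e ∈ A w, e ∉ A r → A w ⊆ insert e (A r) :=
    fun w hw r hr e hew her => subset_insert_of_card_sdiff_eq_one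
      (hdiff w hw r hr (by rintro rfl; exact her hew)) hew her
  intro e he
  by_contra hes
  have hCu : (A t).erase a ⊆ A u := subset_insert_iff.1 (hmiss t ht u hu a hat hau)
  have hCv : (A t).erase a ⊆ A v := subset_insert_iff.1 (hmiss t ht v hv a hat hav)
  have hsub : insert a (A u ∪ A v) ⊆ insert e (A s) :=
    insert_subset (hmiss t ht s hs e (mem_of_mem_erase he) hes hat)
      (union_subset (hmiss u hu s hs e (hCu he) hes) (hmiss v hv s hs e (hCv he) hes))
  have hcard := card_le_card hsub
  rw [card_insert_of_notMem (by simp [hau, hav]), ← card_sdiff_add_card, hdiff u hu v hv huv,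
    hA v hv] at hcard
  have := card_insert_le e (A s)
  rw [hA s hs] at this
  omega

lemma exists_eq_insert_or_exists_eq_erase (hI : 1 < #I) (hA : ∀ t ∈ I, #(A t) = d)
    (hdiff : ∀ t ∈ I, ∀ s ∈ I, t ≠ s → #(A t \ A s) = 1) :
    (∃ (C : Finset α) (y : ι → α), (∀ t ∈ I, y t ∉ C) ∧ ∀ t ∈ I, A t = insert (y t) C) ∨
      ∃ x : ι → α, (∀ t ∈ I, x t ∈ I.biUnion A) ∧ ∀ t ∈ I, A t = (I.biUnion A).erase (x t) := by
  obtain ⟨u, hu, v, hv, huv⟩ := one_lt_card.1 hI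
  obtain ⟨a₀, -⟩ := card_eq_one.1 (hdiff u hu v hv huv)
  have : Nonempty α := ⟨a₀⟩
  have hsub : ∀ t ∈ I, A t ⊆ I.biUnion A := fun t ht => subset_biUnion_of_mem A ht
  by_cases hall : ∀ t ∈ I, A t ⊆ A u ∪ A v
  · right
    have hK : I.biUnion A = A u ∪ A v :=
      (biUnion_subset.2 hall).antisymm (union_subset (hsub u hu) (hsub v hv))
    have hx : ∀ t ∈ I, ∃ x ∉ A t, insert x (A t) = I.biUnion A := fun t ht =>
      exists_eq_insert_iff.2 ⟨hsub t ht, by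
        rw [hK, ← card_sdiff_add_card, hdiff u hu v hv huv, hA v hv, hA t ht, add_comm]⟩
    choose! x hxA hxK using hx
    exact ⟨x, fun t ht => hxK t ht ▸ mem_insert_self _ _,
      fun t ht => by rw [← hxK t ht, erase_insert (hxA t ht)]⟩
  · left
    simp only [not_forall, not_subset, mem_union, not_or] at hall
    obtain ⟨t, ht, a, hat, hau, hav⟩ := hall
    have hC : ∀ s ∈ I, (A t).erase a ⊆ A s := fun s hs =>
      erase_subset_of_notMem_union hA hdiff hu hv huv ht hs hat hau hav
    have hy : ∀ s ∈ I, ∃ y ∉ (A t).erase a, insert y ((A t).erase a) = A s := fun s hs =>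
      exists_eq_insert_iff.2 ⟨hC s hs, by
        have := card_pos.2 ⟨a, hat⟩
        rw [card_erase_of_mem hat, hA t ht, hA s hs] at *
        omega⟩
    choose! y hyC hyA using hy
    exact ⟨(A t).erase a, y, hyC, fun s hs => (hyA s hs).symm⟩

lemma card_biUnion_of_forall_exists_notMem (hI : 1 < #I) (hA : ∀ t ∈ I, #(A t) = d)
    (hdiff : ∀ t ∈ I, ∀ s ∈ I, t ≠ s → #(A t \ A s) = 1) (hnc : ∀ c, ∃ t ∈ I, c ∉ A t) :
    #(I.biUnion A) = #I ∧ (d = 1 ∨ #(I.biUnion A) = d + 1) := by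
  have hinj := injOn_of_card_sdiff_eq_one hdiff
  obtain ⟨t₀, ht₀⟩ := card_pos.1 (by omega : 0 < #I)
  rcases exists_eq_insert_or_exists_eq_erase hI hA hdiff with ⟨C, y, -, hy⟩ | ⟨x, hxK, hx⟩
  · have hC0 : C = ∅ := eq_empty_of_forall_notMem fun c hc =>
      let ⟨t, ht, hct⟩ := hnc c
      hct (hy t ht ▸ mem_insert_of_mem hc)
    simp only [hC0, insert_empty] at hy
    have hyinj : Set.InjOn y I := fun t ht s hs h => hinj ht hs (by rw [hy t ht, hy s hs, h])
    rw [biUnion_congr rfl hy, biUnion_singleton, card_image_of_injOn hyinj, ← hA t₀ ht₀, hy t₀ ht₀]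
    simp
  · have hxinj : Set.InjOn x I := fun t ht s hs h => hinj ht hs (by rw [hx t ht, hx s hs, h])
    have hxsurj : Set.SurjOn x I (I.biUnion A) := fun z hz => by
      obtain ⟨t, ht, hzt⟩ := hnc z
      exact ⟨t, ht, not_not.1 fun h => hzt (hx t ht ▸ mem_erase.2 ⟨Ne.symm h, hz⟩)⟩
    refine ⟨le_antisymm (card_le_card_of_surjOn x hxsurj) (card_le_card_of_injOn x hxK hxinj),
      Or.inr ?_⟩
    have := card_erase_add_one (hxK t₀ ht₀)
    rwa [← hx t₀ ht₀, hA t₀ ht₀, eq_comm] at this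

lemma card_lt_card_biUnion_of_forall_mem (hI : 1 < #I) (hA : ∀ t ∈ I, #(A t) = d)
    (hdiff : ∀ t ∈ I, ∀ s ∈ I, t ≠ s → #(A t \ A s) = 1) {c : α} (hc : ∀ t ∈ I, c ∈ A t) :
    #I < #(I.biUnion A) := by
  have hinj := injOn_of_card_sdiff_eq_one hdiff
  have hK : ∀ t ∈ I, A t ⊆ I.biUnion A := fun t ht => subset_biUnion_of_mem A ht
  obtain ⟨u, hu, v, hv, huv⟩ := one_lt_card.1 hI
  rcases exists_eq_insert_or_exists_eq_erase hI hA hdiff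
    with ⟨C, y, hyC, hy⟩ | ⟨x, hxK, hx⟩
  · have hyinj : Set.InjOn y I := fun t ht s hs h => hinj ht hs (by rw [hy t ht, hy s hs, h])
    have hcC : c ∈ C := by
      by_contra hcC
      have hcy : ∀ t ∈ I, c = y t := fun t ht =>
        (mem_insert.1 (hy t ht ▸ hc t ht)).resolve_right hcC
      exact huv (hyinj hu hv ((hcy u hu).symm.trans (hcy v hv)))
    have hsub : insert c (I.image y) ⊆ I.biUnion A := insert_subset (hK u hu (hc u hu))
      (image_subset_iff.2 fun t ht => hK t ht (hy t ht ▸ mem_insert_self _ _))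
    have hcy : c ∉ I.image y := fun h =>
      let ⟨t, ht, hyt⟩ := mem_image.1 h
      hyC t ht (hyt ▸ hcC)
    calc #I = #(I.image y) := (card_image_of_injOn hyinj).symm
      _ < #(insert c (I.image y)) := by rw [card_insert_of_notMem hcy]; omega
      _ ≤ _ := card_le_card hsub
  · have hxinj : Set.InjOn x I := fun t ht s hs h => hinj ht hs (by rw [hx t ht, hx s hs, h])
    have hxc : Set.MapsTo x I ((I.biUnion A).erase c) := fun t ht =>
      mem_erase.2 ⟨(ne_of_mem_erase (hx t ht ▸ hc t ht)).symm, hxK t ht⟩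
    calc #I ≤ #((I.biUnion A).erase c) := card_le_card_of_injOn x hxc hxinj
      _ < _ := card_erase_lt_of_mem (hK u hu (hc u hu))

lemma one_lt_of_forall_mem (hI : 1 < #I) (hA : ∀ t ∈ I, #(A t) = d)
    (hdiff : ∀ t ∈ I, ∀ s ∈ I, t ≠ s → #(A t \ A s) = 1) {c : α} (hc : ∀ t ∈ I, c ∈ A t) :
    1 < d := by
  obtain ⟨u, hu, v, hv, huv⟩ := one_lt_card.1 hI
  obtain ⟨a, ha⟩ := card_eq_one.1 (hdiff u hu v hv huv)
  obtain ⟨hau, hav⟩ := mem_sdiff.1 (ha ▸ mem_singleton_self a)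
  rw [← hA u hu]
  exact one_lt_card.2 ⟨a, hau, c, hc u hu, fun h => hav (h ▸ hc v hv)⟩

end Family

section SplitGraph

variable {V : Type*} {S : SimpleGraph V} {I : Finset V}

lemma not_adj_of_mem (hI : Sᶜ.IsClique (I : Set V)) {u v : V} (hu : u ∈ I) (hv : v ∈ I) :
    ¬S.Adj u v := fun h => (hI (mem_coe.2 hu) (mem_coe.2 hv) h.ne).2 h

variable [Fintype V] [DecidableEq V] {K : Finset V}

lemma mem_of_adj (hpart : K ∪ I = univ) (hI : Sᶜ.IsClique (I : Set V)) {t z : V}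
    (ht : t ∈ I) (h : S.Adj t z) : z ∈ K :=
  (mem_union.1 (hpart ▸ mem_univ z)).resolve_right fun hz => not_adj_of_mem hI ht hz h

lemma mem_of_not_adj (hpart : K ∪ I = univ) (hK : S.IsClique (K : Set V)) {k w : V}
    (hk : k ∈ K) (hwk : w ≠ k) (h : ¬S.Adj k w) : w ∈ I :=
  (mem_union.1 (hpart ▸ mem_univ w)).resolve_left fun hw =>
    h (hK (mem_coe.2 hk) (mem_coe.2 hw) hwk.symm)

lemma eq_or_adj_of_adj_of_adj (hpart : K ∪ I = univ) (hK : S.IsClique (K : Set V))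
    (hI : Sᶜ.IsClique (I : Set V)) {z p q : V} (hz : z ∈ I) (hp : S.Adj z p) (hq : S.Adj z q) :
    p = q ∨ S.Adj p q :=
  or_iff_not_imp_left.2 <|
    hK (mem_coe.2 (mem_of_adj hpart hI hz hp)) (mem_coe.2 (mem_of_adj hpart hI hz hq))

lemma isInducedP4_of_adj_of_not_adj (hpart : K ∪ I = univ) (hK : S.IsClique (K : Set V))
    (hI : Sᶜ.IsClique (I : Set V)) {u v x y : V} (hu : u ∈ I) (hv : v ∈ I)
    (hux : S.Adj u x) (hvx : ¬S.Adj v x) (hvy : S.Adj v y) (huy : ¬S.Adj u y) :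
    IsInducedP4 S {u, x, y, v} := by
  have hxy : S.Adj x y := hK (mem_coe.2 (mem_of_adj hpart hI hu hux))
    (mem_coe.2 (mem_of_adj hpart hI hv hvy)) (by rintro rfl; exact huy hux)
  exact isInducedP4_iff.2 ⟨u, x, y, v, rfl, hux, hxy, hvy.symm, huy, not_adj_of_mem hI hu hv,
    fun h => hvx h.symm⟩

lemma exists_eq_of_isInducedP4 (hpart : K ∪ I = univ) (hK : S.IsClique (K : Set V))
    (hI : Sᶜ.IsClique (I : Set V)) {u v : V} (hu : u ∈ I) (hv : v ∈ I) (huv : u ≠ v)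
    {T : Finset V} (hT : IsInducedP4 S T) (huT : u ∈ T) (hvT : v ∈ T) :
    ∃ x y, S.Adj u x ∧ ¬S.Adj v x ∧ S.Adj v y ∧ ¬S.Adj u y ∧ T = {u, x, y, v} := by
  obtain ⟨a, b, c, d, rfl, hab, hbc, hcd, hac, had, hbd⟩ := isInducedP4_iff.1 hT
  -- an inner vertex of the path has two non-adjacent neighbours, which cannot both lie in `K`
  have hb : b ∉ I := fun hb => by
    rcases eq_or_adj_of_adj_of_adj hpart hK hI hb hab.symm hbc with rfl | h
    exacts [had hcd, hac h]
  have hc : c ∉ I := fun hc => by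
    rcases eq_or_adj_of_adj_of_adj hpart hK hI hc hbc.symm hcd with rfl | h
    exacts [had hab, hbd h]
  have hend : ∀ w ∈ I, w ∈ ({a, b, c, d} : Finset V) → w = a ∨ w = d := fun w hw hwT => by
    simp only [mem_insert, mem_singleton] at hwT
    rcases hwT with rfl | rfl | rfl | rfl
    exacts [Or.inl rfl, absurd hw hb, absurd hw hc, Or.inr rfl]
  rcases hend u hu huT with rfl | rfl <;> rcases hend v hv hvT with rfl | rfl
  · exact absurd rfl huv
  · exact ⟨b, c, hab, fun h => hbd h.symm, hcd.symm, hac, rfl⟩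
  · refine ⟨c, b, hcd.symm, hac, hab, fun h => hbd h.symm, ?_⟩
    ext
    simp only [mem_insert, mem_singleton]
    tauto
  · exact absurd rfl huv

lemma sigmaP4_eq_card_mul [DecidableRel S.Adj] (hpart : K ∪ I = univ)
    (hK : S.IsClique (K : Set V)) (hI : Sᶜ.IsClique (I : Set V)) {u v : V} (hu : u ∈ I)
    (hv : v ∈ I) (huv : u ≠ v) :
    sigmaP4 S u v =
      #(S.neighborFinset u \ S.neighborFinset v) * #(S.neighborFinset v \ S.neighborFinset u) := by
  rw [← card_product, ← Nat.card_eq_finsetCard, sigmaP4]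
  symm
  refine Nat.card_eq_of_bijective (fun p => ⟨{u, p.1.1, p.1.2, v}, ?_⟩) ⟨?_, ?_⟩
  · obtain ⟨⟨x, y⟩, hp⟩ := p
    simp only [mem_product, mem_sdiff, mem_neighborFinset] at hp
    exact ⟨isInducedP4_of_adj_of_not_adj hpart hK hI hu hv hp.1.1 hp.1.2 hp.2.1 hp.2.2,
      by simp, by simp⟩
  · rintro ⟨⟨x, y⟩, hp⟩ ⟨⟨x', y'⟩, hp'⟩ h
    simp only [mem_product, mem_sdiff, mem_neighborFinset, Subtype.mk.injEq,
      Prod.mk.injEq] at hp hp' h ⊢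
    have huv' := not_adj_of_mem hI hu hv
    have hx : x ∈ ({u, x', y', v} : Finset V) := h ▸ by simp
    have hy : y ∈ ({u, x', y', v} : Finset V) := h ▸ by simp
    simp only [mem_insert, mem_singleton] at hx hy
    constructor
    · rcases hx with rfl | rfl | rfl | rfl
      exacts [absurd hp.1.1 S.irrefl, rfl, absurd hp.1.1 hp'.2.2, absurd hp.1.1 huv']
    · rcases hy with rfl | rfl | rfl | rfl
      exacts [absurd hp.2.1.symm huv', absurd hp.2.1 hp'.1.2, rfl, absurd hp.2.1 S.irrefl]
  · rintro ⟨T, hT, huT, hvT⟩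
    obtain ⟨x, y, hux, hvx, hvy, huy, rfl⟩ :=
      exists_eq_of_isInducedP4 hpart hK hI hu hv huv hT huT hvT
    exact ⟨⟨(x, y), by simp [*]⟩, rfl⟩

lemma forall_exists_not_adj_iff (hpart : K ∪ I = univ) (hK : S.IsClique (K : Set V))
    (hI : Sᶜ.IsClique (I : Set V)) (hI2 : 1 < #I) :
    (∀ x, ∃ w, w ≠ x ∧ ¬S.Adj x w) ↔ ∀ c, ∃ t ∈ I, ¬S.Adj t c := by
  constructor
  · intro h c
    rcases mem_union.1 (hpart ▸ mem_univ c) with hc | hc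
    · obtain ⟨w, hwc, hcw⟩ := h c
      exact ⟨w, mem_of_not_adj hpart hK hc hwc hcw, fun h => hcw h.symm⟩
    · obtain ⟨t, ht, htc⟩ := exists_mem_ne hI2 c
      exact ⟨t, ht, not_adj_of_mem hI ht hc⟩
  · intro h x
    obtain ⟨t, ht, htx⟩ := h x
    by_cases hxt : t = x
    · obtain ⟨s, hs, hsx⟩ := exists_mem_ne hI2 x
      exact ⟨s, hsx, not_adj_of_mem hI (hxt ▸ ht) hs⟩
    · exact ⟨t, hxt, fun h => htx h.symm⟩

lemma forall_exists_isInducedP4_iff [DecidableRel S.Adj] (hpart : K ∪ I = univ)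
    (hK : S.IsClique (K : Set V)) (hI : Sᶜ.IsClique (I : Set V)) (hI2 : 1 < #I)
    (hcov : I.biUnion (fun v => S.neighborFinset v) = K)
    (hdiff : ∀ t ∈ I, ∀ s ∈ I, t ≠ s → (S.neighborFinset t \ S.neighborFinset s).Nonempty) :
    (∀ x, ∃ T, IsInducedP4 S T ∧ x ∈ T) ↔ ∀ x, ∃ w, w ≠ x ∧ ¬S.Adj x w := by
  refine ⟨fun h x => ?_, fun hU x => ?_⟩
  · obtain ⟨T, hT, hxT⟩ := h x
    by_contra! hx
    exact notMem_of_isInducedP4 hT hx hxT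
  have hdiff' : ∀ t ∈ I, ∀ s ∈ I, t ≠ s → ∃ x, S.Adj t x ∧ ¬S.Adj s x := by
    simpa [Finset.Nonempty] using hdiff
  rcases mem_union.1 (hpart ▸ mem_univ x) with hx | hx
  · obtain ⟨w, hwx, hxw⟩ := hU x
    have hw := mem_of_not_adj hpart hK hx hwx hxw
    obtain ⟨t, ht, htx⟩ : ∃ t ∈ I, S.Adj t x := by simpa [← hcov] using hx
    obtain ⟨y, hwy, hty⟩ := hdiff' w hw t ht (by rintro rfl; exact hxw htx.symm)
    exact ⟨_, isInducedP4_of_adj_of_not_adj hpart hK hI ht hw htx (fun h => hxw h.symm) hwy hty,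
      by simp⟩
  · obtain ⟨s, hs, hsx⟩ := exists_mem_ne hI2 x
    obtain ⟨a, hxa, hsa⟩ := hdiff' x hx s hs hsx.symm
    obtain ⟨b, hsb, hxb⟩ := hdiff' s hs x hx hsx
    exact ⟨_, isInducedP4_of_adj_of_not_adj hpart hK hI hx hs hxa hsa hsb hxb, by simp⟩

end SplitGraph

theorem stmt17_general {V : Type*} [Fintype V] [DecidableEq V]
    (S : SimpleGraph V) [DecidableRel S.Adj] (K I : Finset V)
    (hpart : K ∪ I = Finset.univ)
    (hK : S.IsClique (K : Set V)) (hI : Sᶜ.IsClique (I : Set V))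
    (hcov : I.biUnion (fun v => S.neighborFinset v) = K)
    (hI2 : 2 ≤ I.card)
    (hsig : ∀ u ∈ I, ∀ v ∈ I, u ≠ v → sigmaP4 S u v = 1)
    (U : Set V) (hU : U = {x : V | ∀ w : V, w ≠ x → S.Adj x w})
    (d : ℕ) (hd : ∀ v ∈ I, S.degree v = d) :
    ((∀ x : V, ∃ T : Finset V, IsInducedP4 S T ∧ x ∈ T) ↔ U = ∅) ∧
    ((∀ x : V, ∃ T : Finset V, IsInducedP4 S T ∧ x ∈ T) →
      K.card = I.card ∧ (d = 1 ∨ d = K.card - 1)) ∧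
    ((K.card = I.card ∨ d = 1) →
      ∀ x : V, ∃ T : Finset V, IsInducedP4 S T ∧ x ∈ T) := by
  have hA : ∀ t ∈ I, #(S.neighborFinset t) = d := fun t ht =>
    (S.card_neighborFinset_eq_degree t).trans (hd t ht)
  have hdiff : ∀ t ∈ I, ∀ s ∈ I, t ≠ s → #(S.neighborFinset t \ S.neighborFinset s) = 1 :=
    fun t ht s hs hts => Nat.eq_one_of_mul_eq_one_right <|
      (sigmaP4_eq_card_mul hpart hK hI ht hs hts).symm.trans (hsig t ht s hs hts)
  have hUempty : U = ∅ ↔ ∀ x, ∃ w, w ≠ x ∧ ¬S.Adj x w := by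
    simp [hU, Set.eq_empty_iff_forall_notMem]
  have hactive := (forall_exists_isInducedP4_iff hpart hK hI hI2 hcov fun t ht s hs hts =>
    card_pos.1 (hdiff t ht s hs hts ▸ one_pos)).trans hUempty.symm
  have hcommon : U = ∅ ↔ ∀ c, ∃ t ∈ I, c ∉ S.neighborFinset t := by
    simpa using hUempty.trans (forall_exists_not_adj_iff hpart hK hI hI2)
  refine ⟨hactive, fun h => ?_, fun h => hactive.2 (hcommon.2 fun c => ?_)⟩
  · have := card_biUnion_of_forall_exists_notMem hI2 hA hdiff (hcommon.1 (hactive.1 h))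
    rw [hcov] at this
    omega
  · by_contra! hc
    rcases h with h | h
    · exact (card_lt_card_biUnion_of_forall_mem hI2 hA hdiff hc).ne' (hcov ▸ h)
    · exact (one_lt_of_forall_mem hI2 hA hdiff hc).ne' h

theorem stmt17 {V : Type*} [Fintype V] [DecidableEq V] [Nonempty V]
    (S : SimpleGraph V) [DecidableRel S.Adj] (K I : Finset V)
    (hpart : K ∪ I = Finset.univ) (hdisj : Disjoint K I)
    (hK : S.IsClique (K : Set V)) (hI : Sᶜ.IsClique (I : Set V))
    (hcov : I.biUnion (fun v => S.neighborFinset v) = K)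
    (hbK : K.card = S.cliqueNum) (hbI : I.card = Sᶜ.cliqueNum)
    (hI2 : 2 ≤ I.card)
    (hsig : ∀ u ∈ I, ∀ v ∈ I, u ≠ v → sigmaP4 S u v = 1)
    (U : Set V) (hU : U = {x : V | ∀ w : V, w ≠ x → S.Adj x w})
    (d : ℕ) (hd : ∀ v ∈ I, S.degree v = d) :
    ((∀ x : V, ∃ T : Finset V, IsInducedP4 S T ∧ x ∈ T) ↔ U = ∅) ∧
    ((∀ x : V, ∃ T : Finset V, IsInducedP4 S T ∧ x ∈ T) →
      K.card = I.card ∧ (d = 1 ∨ d = K.card - 1)) ∧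
    ((K.card = I.card ∨ d = 1) →
      ∀ x : V, ∃ T : Finset V, IsInducedP4 S T ∧ x ∈ T) :=
  stmt17_general S K I hpart hK hI hcov hI2 hsig U hU d hd
end

section
/- Let (S,K,I) be a split graph and let T be the split graph on the same vertex set with the same bipartition (K,I) (K a clique of T, I an independent set of T) whose cross edges are complemented: for v ∈ I and x ∈ K, v is adjacent to x in T if and only if v is not adjacent to x in S. (T is exactly the complement of the Tyshkevich inversion S^ι of (S,K,I).) Then σ_{uv}(T) = σ_{uv}(S) for all distinct u,v ∈ I; that is, Φ(S) = Φ(T). -/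
set_option maxHeartbeats 1000000


open SimpleGraph

lemma card_four_of_distinct {V : Type*} [DecidableEq V] {a b c d : V}
    (hab : a ≠ b) (hac : a ≠ c) (had : a ≠ d) (hbc : b ≠ c) (hbd : b ≠ d) (hcd : c ≠ d) :
    ({a, b, c, d} : Finset V).card = 4 := by
  rw [Finset.card_insert_of_notMem (by simp [hab, hac, had]),
    Finset.card_insert_of_notMem (by simp [hbc, hbd]),
    Finset.card_insert_of_notMem (by simp [hcd]), Finset.card_singleton]

lemma p4_of_pattern {V : Type*} [DecidableEq V] (S : SimpleGraph V) {a b c d : V}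
    (hab : a ≠ b) (hac : a ≠ c) (had : a ≠ d) (hbc : b ≠ c) (hbd : b ≠ d) (hcd : c ≠ d)
    (eab : S.Adj a b) (ebc : S.Adj b c) (ecd : S.Adj c d)
    (nac : ¬ S.Adj a c) (nad : ¬ S.Adj a d) (nbd : ¬ S.Adj b d) :
    IsInducedP4 S ({a, b, c, d} : Finset V) := by
  refine ⟨card_four_of_distinct hab hac had hbc hbd hcd, ?_⟩
  have hmem : ∀ i : Fin 4, (![a, b, c, d] i) ∈ (({a, b, c, d} : Finset V) : Set V) := by
    intro i; fin_cases i <;> simp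
  have hinj : Function.Injective (fun i : Fin 4 =>
      (⟨![a, b, c, d] i, hmem i⟩ : (({a, b, c, d} : Finset V) : Set V))) := by
    intro i j h
    simp only [Subtype.mk.injEq] at h
    fin_cases i <;> fin_cases j <;> simp_all
  have hsurj : Function.Surjective (fun i : Fin 4 =>
      (⟨![a, b, c, d] i, hmem i⟩ : (({a, b, c, d} : Finset V) : Set V))) := by
    rintro ⟨x, hx⟩
    simp only [Finset.coe_insert, Finset.coe_singleton, Set.mem_insert_iff,
      Set.mem_singleton_iff] at hx
    rcases hx with rfl | rfl | rfl | rfl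
    exacts [⟨0, rfl⟩, ⟨1, rfl⟩, ⟨2, rfl⟩, ⟨3, rfl⟩]
  have nca : ¬ S.Adj c a := fun h => nac h.symm
  have nda : ¬ S.Adj d a := fun h => nad h.symm
  have ndb : ¬ S.Adj d b := fun h => nbd h.symm
  have hadj2 : ∀ i j : Fin 4,
      (S.induce (({a, b, c, d} : Finset V) : Set V)).Adj ⟨![a, b, c, d] i, hmem i⟩
        ⟨![a, b, c, d] j, hmem j⟩ ↔ (pathGraph 4).Adj i j := by
    intro i j
    rw [pathGraph_adj]
    show S.Adj (![a, b, c, d] i) (![a, b, c, d] j) ↔ _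
    fin_cases i <;> fin_cases j <;>
      simp [eab, ebc, ecd, eab.symm, ebc.symm, ecd.symm, nac, nad, nbd, nca, nda, ndb,
        SimpleGraph.irrefl]
  exact ⟨(SimpleGraph.Iso.symm
    ⟨Equiv.ofBijective _ ⟨hinj, hsurj⟩, fun {i j} => hadj2 i j⟩)⟩

lemma pattern_of_p4 {V : Type*} [DecidableEq V] (S : SimpleGraph V) {T' : Finset V}
    (h : IsInducedP4 S T') :
    ∃ a b c d : V, T' = {a, b, c, d} ∧
      a ≠ b ∧ a ≠ c ∧ a ≠ d ∧ b ≠ c ∧ b ≠ d ∧ c ≠ d ∧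
      S.Adj a b ∧ S.Adj b c ∧ S.Adj c d ∧ ¬ S.Adj a c ∧ ¬ S.Adj a d ∧ ¬ S.Adj b d := by
  obtain ⟨hcard, ⟨φ⟩⟩ := h
  set g : Fin 4 → (T' : Set V) := fun i => φ.symm i with hg
  have hne : ∀ i j : Fin 4, i ≠ j → ((g i : V) ≠ (g j : V)) := by
    intro i j hij h
    exact hij (φ.symm.toEquiv.injective (Subtype.ext h))
  have hadj : ∀ i j : Fin 4, S.Adj (g i : V) (g j : V) ↔ (pathGraph 4).Adj i j := by
    intro i j
    rw [show S.Adj (g i : V) (g j : V) ↔ (S.induce (T' : Set V)).Adj (g i) (g j) from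
      Iff.rfl]
    exact φ.symm.map_adj_iff
  refine ⟨g 0, g 1, g 2, g 3, ?_,
    hne 0 1 (by decide), hne 0 2 (by decide), hne 0 3 (by decide),
    hne 1 2 (by decide), hne 1 3 (by decide), hne 2 3 (by decide),
    (hadj 0 1).2 (by rw [pathGraph_adj]; decide), (hadj 1 2).2 (by rw [pathGraph_adj]; decide),
    (hadj 2 3).2 (by rw [pathGraph_adj]; decide),
    fun h => by have h2 := (hadj 0 2).1 h; rw [pathGraph_adj] at h2; revert h2; decide,
    fun h => by have h2 := (hadj 0 3).1 h; rw [pathGraph_adj] at h2; revert h2; decide,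
    fun h => by have h2 := (hadj 1 3).1 h; rw [pathGraph_adj] at h2; revert h2; decide⟩
  have hsub : ({(g 0 : V), (g 1 : V), (g 2 : V), (g 3 : V)} : Finset V) ⊆ T' := by
    intro x hx
    simp only [Finset.mem_insert, Finset.mem_singleton] at hx
    rcases hx with rfl | rfl | rfl | rfl <;> exact (g _).2
  have hc4 : ({(g 0 : V), (g 1 : V), (g 2 : V), (g 3 : V)} : Finset V).card = 4 :=
    card_four_of_distinct (hne 0 1 (by decide)) (hne 0 2 (by decide)) (hne 0 3 (by decide))
      (hne 1 2 (by decide)) (hne 1 3 (by decide)) (hne 2 3 (by decide))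
  exact (Finset.eq_of_subset_of_card_le hsub (by rw [hcard, hc4])).symm

lemma key_lemma {V : Type*} [DecidableEq V] (S T : SimpleGraph V) (K I : Finset V)
    (hpart : ∀ x : V, x ∈ K ∨ x ∈ I) (hdisj : ∀ x : V, x ∈ K → x ∈ I → False)
    (hK : ∀ a ∈ K, ∀ b ∈ K, a ≠ b → S.Adj a b) (hI : ∀ a ∈ I, ∀ b ∈ I, ¬ S.Adj a b)
    (hT : ∀ a b : V, T.Adj a b ↔
      ((a ∈ K ∧ b ∈ K ∧ a ≠ b) ∨
       (a ∈ K ∧ b ∈ I ∧ ¬ S.Adj a b) ∨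
       (a ∈ I ∧ b ∈ K ∧ ¬ S.Adj a b)))
    (u v : V) (hu : u ∈ I) (hv : v ∈ I) (huv : u ≠ v)
    (T' : Finset V) (hp : IsInducedP4 S T') (huT : u ∈ T') (hvT : v ∈ T') :
    IsInducedP4 T T' := by
  obtain ⟨a, b, c, d, hTeq, hab, hac, had, hbc, hbd, hcd,
    eab, ebc, ecd, nac, nad, nbd⟩ := pattern_of_p4 S hp
  have memK : ∀ x y : V, S.Adj x y → y ∈ I → x ∈ K := fun x y hxy hy =>
    (hpart x).resolve_right (fun hx => hI x hx y hy hxy)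
  subst hTeq
  simp only [Finset.mem_insert, Finset.mem_singleton] at huT hvT
  -- main construction when {u, v} = {a, d}
  have main : a ∈ I → d ∈ I → IsInducedP4 T ({a, b, c, d} : Finset V) := by
    intro ha hd
    have hbK : b ∈ K := memK b a eab.symm ha
    have hcK : c ∈ K := memK c d ecd hd
    have Tac : T.Adj a c := (hT a c).2 (Or.inr (Or.inr ⟨ha, hcK, nac⟩))
    have Tcb : T.Adj c b := (hT c b).2 (Or.inl ⟨hcK, hbK, hbc.symm⟩)
    have Tbd : T.Adj b d := (hT b d).2 (Or.inr (Or.inl ⟨hbK, hd, nbd⟩))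
    have nTab : ¬ T.Adj a b := by
      rw [hT]; rintro (⟨h1, -⟩ | ⟨h1, -⟩ | ⟨-, -, h3⟩)
      exacts [hdisj a h1 ha, hdisj a h1 ha, h3 eab]
    have nTad : ¬ T.Adj a d := by
      rw [hT]; rintro (⟨h1, -⟩ | ⟨h1, -⟩ | ⟨-, h2, -⟩)
      exacts [hdisj a h1 ha, hdisj a h1 ha, hdisj d h2 hd]
    have nTcd : ¬ T.Adj c d := by
      rw [hT]; rintro (⟨-, h2, -⟩ | ⟨-, -, h3⟩ | ⟨h1, -, -⟩)
      exacts [hdisj d h2 hd, h3 ecd, hdisj c hcK h1]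
    have := p4_of_pattern T hac hab had (Ne.symm hbc) hcd hbd
      Tac Tcb Tbd nTab nTad nTcd
    have heq : ({a, c, b, d} : Finset V) = ({a, b, c, d} : Finset V) := by
      ext x; simp; tauto
    rwa [heq] at this
  -- impossible cases helpers
  have nSuv : ¬ S.Adj u v := hI u hu v hv
  rcases huT with rfl | rfl | rfl | rfl <;> rcases hvT with rfl | rfl | rfl | rfl
  · exact absurd rfl huv
  · exact absurd eab nSuv
  · -- u = a, v = c : b, d ∈ K but ¬ S.Adj b d, contradiction
    exact absurd (hK b (memK b u eab.symm hu) d (memK d v ecd.symm hv) hbd) nbd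
  · exact main hu hv
  · exact absurd eab.symm nSuv
  · exact absurd rfl huv
  · exact absurd ebc nSuv
  · -- u = b, v = d : a, c ∈ K but ¬ S.Adj a c
    exact absurd (hK a (memK a u eab hu) c (memK c v ecd hv) hac) nac
  · exact absurd (hK b (memK b v eab.symm hv) d (memK d u ecd.symm hu) hbd) nbd
  · exact absurd ebc.symm nSuv
  · exact absurd rfl huv
  · exact absurd ecd nSuv
  · exact main hv hu
  · exact absurd (hK a (memK a v eab hv) c (memK c u ecd hu) hac) nac
  · exact absurd ecd.symm nSuv
  · exact absurd rfl huv

theorem stmt19 {V : Type*} [Fintype V] [DecidableEq V] [Nonempty V]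
    (S : SimpleGraph V) [DecidableRel S.Adj] (K I : Finset V)
    (hpart : K ∪ I = Finset.univ) (hdisj : Disjoint K I)
    (hK : S.IsClique (K : Set V)) (hI : Sᶜ.IsClique (I : Set V))
    (T : SimpleGraph V)
    (hT : ∀ a b : V, T.Adj a b ↔
      ((a ∈ K ∧ b ∈ K ∧ a ≠ b) ∨
       (a ∈ K ∧ b ∈ I ∧ ¬ S.Adj a b) ∨
       (a ∈ I ∧ b ∈ K ∧ ¬ S.Adj a b))) :
    ∀ u ∈ I, ∀ v ∈ I, u ≠ v → sigmaP4 T u v = sigmaP4 S u v := by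
  intro u hu v hv huv
  have hpart' : ∀ x : V, x ∈ K ∨ x ∈ I := by
    intro x
    have : x ∈ K ∪ I := by rw [hpart]; exact Finset.mem_univ x
    simpa [Finset.mem_union] using this
  have hdisj' : ∀ x : V, x ∈ K → x ∈ I → False := fun x hxK hxI =>
    Finset.disjoint_left.1 hdisj hxK hxI
  have hK' : ∀ a ∈ K, ∀ b ∈ K, a ≠ b → S.Adj a b := fun a ha b hb hne =>
    hK (by simpa using ha) (by simpa using hb) hne
  have hI' : ∀ a ∈ I, ∀ b ∈ I, ¬ S.Adj a b := by
    intro a ha b hb hadj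
    rcases eq_or_ne a b with rfl | hne
    · exact S.irrefl hadj
    · exact (hI (by simpa using ha) (by simpa using hb) hne).2 hadj
  -- hypotheses with the roles of S and T swapped
  have hK_T : ∀ a ∈ K, ∀ b ∈ K, a ≠ b → T.Adj a b := fun a ha b hb hne =>
    (hT a b).2 (Or.inl ⟨ha, hb, hne⟩)
  have hI_T : ∀ a ∈ I, ∀ b ∈ I, ¬ T.Adj a b := by
    intro a ha b hb hadj
    rcases (hT a b).1 hadj with ⟨h1, -⟩ | ⟨h1, -⟩ | ⟨-, h2, -⟩
    exacts [hdisj' a h1 ha, hdisj' a h1 ha, hdisj' b h2 hb]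
  have hT_rev : ∀ a b : V, S.Adj a b ↔
      ((a ∈ K ∧ b ∈ K ∧ a ≠ b) ∨
       (a ∈ K ∧ b ∈ I ∧ ¬ T.Adj a b) ∨
       (a ∈ I ∧ b ∈ K ∧ ¬ T.Adj a b)) := by
    intro a b
    constructor
    · intro hS
      rcases hpart' a with haK | haI <;> rcases hpart' b with hbK | hbI
      · exact Or.inl ⟨haK, hbK, hS.ne⟩
      · refine Or.inr (Or.inl ⟨haK, hbI, fun hTab => ?_⟩)
        rcases (hT a b).1 hTab with ⟨-, h2, -⟩ | ⟨-, -, h3⟩ | ⟨h1, -, -⟩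
        exacts [hdisj' b h2 hbI, h3 hS, hdisj' a haK h1]
      · refine Or.inr (Or.inr ⟨haI, hbK, fun hTab => ?_⟩)
        rcases (hT a b).1 hTab with ⟨h1, -⟩ | ⟨h1, -⟩ | ⟨-, -, h3⟩
        exacts [hdisj' a h1 haI, hdisj' a h1 haI, h3 hS]
      · exact absurd hS (hI' a haI b hbI)
    · rintro (⟨h1, h2, h3⟩ | ⟨h1, h2, h3⟩ | ⟨h1, h2, h3⟩)
      · exact hK' a h1 b h2 h3
      · by_contra hnS
        exact h3 ((hT a b).2 (Or.inr (Or.inl ⟨h1, h2, hnS⟩)))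
      · by_contra hnS
        exact h3 ((hT a b).2 (Or.inr (Or.inr ⟨h1, h2, hnS⟩)))
  refine Nat.card_congr (Equiv.subtypeEquivRight fun T' => ?_)
  constructor
  · rintro ⟨hp, huT, hvT⟩
    exact ⟨key_lemma T S K I hpart' hdisj' hK_T hI_T hT_rev u v hu hv huv T' hp huT hvT,
      huT, hvT⟩
  · rintro ⟨hp, huT, hvT⟩
    exact ⟨key_lemma S T K I hpart' hdisj' hK' hI' hT u v hu hv huv T' hp huT hvT,
      huT, hvT⟩
end
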